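/- Let q be a prime power, a < b positive integers with a ≤ q, and F(X,Y) = X^a + αY^b + R(X,Y) ∈ F_q[X,Y] with α ≠ 0, where every monomial of R has weighted degree less than ab/gcd(a,b) under the weights w(X) = b/gcd(a,b), w(Y) = a/gcd(a,b). If F has exactly aq zeros in F_q^2, then {F(X,Y), Y^q − Y} is a Gröbner basis for the ideal ⟨F, X^q − X, Y^q − Y⟩ with respect to the weighted degree lexicographic ordering ≺_w (with ties broken by lex with Y ≺ X), and the footprint equals {X^{i}Y^{j} : 0 ≤ i < a, 0 ≤ j < q}. -/

import Mathlib

open MvPolynomial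

/-- The leading monomial (multidegree) of a multivariate polynomial with respect to a
monomial order. -/
noncomputable def lmDeg {σ : Type*} {F : Type*} [CommSemiring F]
    (ord : MonomialOrder σ) (f : MvPolynomial σ F) : σ →₀ ℕ :=
  ord.toSyn.symm (f.support.sup ord.toSyn)


/-!
The leading monomials of `F` and `Y^q - Y` are `X^a` and `Y^q`, so every monomial outside the
box `{X^i Y^j : i < a, j < q}` is the leading monomial of a multiple of one of them: the
footprint lies in the box, which has `aq` elements. Conversely, every element of `J` vanishes on
the `aq` zeros of `F`; since every function on `F_q²` is a polynomial function, division by `J`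
shows that the footprint monomials span all functions on this zero set, so the footprint has at
least `aq` elements. Hence the footprint is the box, and the leading monomial of a nonzero
element of `J`, lying outside the box, is divisible by `X^a` or by `Y^q`.
-/

theorem MvPolynomial.exists_eval_eq {σ K : Type*} [Finite σ] [Field K] [Fintype K]
    (φ : (σ → K) → K) : ∃ p : MvPolynomial σ K, ∀ x, eval x p = φ x := by
  obtain ⟨p, -, hp⟩ := Submodule.mem_map.mp
    ((map_restrict_dom_evalₗ K σ).symm ▸ Submodule.mem_top : φ ∈ _)
  exact ⟨p, fun x => congrFun hp x⟩

namespace MonomialOrder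

variable {σ : Type*} (m : MonomialOrder σ)

theorem lmDeg_eq_degree {R : Type*} [CommSemiring R] (f : MvPolynomial σ R) :
    lmDeg m f = m.degree f := rfl

def footprint {R : Type*} [CommSemiring R] (J : Ideal (MvPolynomial σ R)) : Set (σ →₀ ℕ) :=
  {μ | ∀ f ∈ J, f ≠ 0 → m.degree f ≠ μ}

variable {m}

theorem degree_X_pow_add_of_lt {R : Type*} [CommSemiring R] [Nontrivial R] {i : σ} {n : ℕ}
    (hn : n ≠ 0) {p : MvPolynomial σ R}
    (hp : ∀ μ ∈ p.support, m.toSyn μ < m.toSyn (Finsupp.single i n)) :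
    m.degree (X i ^ n + p) = Finsupp.single i n := by
  have hdeg : m.degree (X i ^ n : MvPolynomial σ R) = Finsupp.single i n := by
    classical
    rw [X_pow_eq_monomial, m.degree_monomial, if_neg one_ne_zero]
  have hpos : m.toSyn 0 < m.toSyn (Finsupp.single i n) :=
    m.toSyn_strictMono (pos_iff_ne_zero.mpr (Finsupp.single_ne_zero.mpr hn))
  rw [m.degree_add_of_lt (hdeg ▸ (m.degree_lt_iff hpos).mpr hp), hdeg]

theorem degree_X_pow_sub_X {R : Type*} [CommRing R] [Nontrivial R] {q : ℕ} (hq : 2 ≤ q)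
    (i : σ) : m.degree (X i ^ q - X i : MvPolynomial σ R) = Finsupp.single i q := by
  rw [sub_eq_add_neg]
  refine m.degree_X_pow_add_of_lt (by omega) fun μ hμ => ?_
  rw [support_neg, support_X, Finset.mem_singleton] at hμ
  exact hμ ▸ m.toSyn_strictMono
    (Finsupp.single_mono.strictMono_of_injective (Finsupp.single_injective i) (by omega))

theorem notMem_footprint_of_degree_le {R : Type*} [CommSemiring R] [NoZeroDivisors R]
    [Nontrivial R] {J : Ideal (MvPolynomial σ R)} {g : MvPolynomial σ R} (hg : g ∈ J)
    (hg0 : g ≠ 0) {μ : σ →₀ ℕ} (hμ : m.degree g ≤ μ) : μ ∉ m.footprint J := by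
  have hmon : (monomial (μ - m.degree g) 1 : MvPolynomial σ R) ≠ 0 := by simp
  intro h
  refine h _ (J.mul_mem_left (monomial (μ - m.degree g) 1) hg) (mul_ne_zero hmon hg0) ?_
  classical
  rw [m.degree_mul hmon hg0, m.degree_monomial, if_neg one_ne_zero, tsub_add_cancel_of_le hμ]

variable {K : Type*} [Field K]

theorem exists_sub_mem_support_subset_footprint (J : Ideal (MvPolynomial σ K))
    (f : MvPolynomial σ K) : ∃ r, f - r ∈ J ∧ ↑r.support ⊆ m.footprint J := by
  obtain ⟨g, r, hf, -, hr⟩ := m.div_set (B := {g | g ∈ J ∧ g ≠ 0})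
    (fun b hb => (m.leadingCoeff_ne_zero_iff.mpr hb.2).isUnit) f
  refine ⟨r, ?_, fun μ hμ b hb hb0 hbμ => hr μ hμ b ⟨hb, hb0⟩ hbμ.le⟩
  rw [hf, add_sub_cancel_right, Finsupp.linearCombination_apply]
  exact J.sum_mem fun b _ => J.smul_mem _ b.2.1

theorem ncard_le_ncard_footprint [Finite σ] [Fintype K] {J : Ideal (MvPolynomial σ K)}
    {V : Set (σ → K)} (hV : ∀ f ∈ J, ∀ P ∈ V, eval P f = 0) (hfin : (m.footprint J).Finite) :
    V.ncard ≤ (m.footprint J).ncard := by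
  classical
  set S := hfin.toFinset
  let e : S → V → K := fun μ P => eval (P : σ → K) (monomial (μ : σ →₀ ℕ) 1)
  have hspan : Submodule.span K (Set.range e) = ⊤ := by
    refine eq_top_iff.mpr fun v _ => (Submodule.mem_span_range_iff_exists_fun K).mpr ?_
    obtain ⟨p, hp⟩ := exists_eval_eq fun x => if h : x ∈ V then v ⟨x, h⟩ else 0
    obtain ⟨r, hpr, hr⟩ := m.exists_sub_mem_support_subset_footprint J p
    refine ⟨fun μ => r.coeff μ, funext fun P => ?_⟩
    have hPr : eval (P : σ → K) r = v P := by
      have hPpr := hV _ hpr P P.2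
      rw [map_sub, sub_eq_zero] at hPpr
      rw [← hPpr, hp]
      simp
    have hsupp : r.support ⊆ S := fun μ hμ => hfin.mem_toFinset.mpr (hr hμ)
    rw [← hPr, eval_eq, Finset.sum_subset hsupp fun μ _ hμ => by simp [notMem_support_iff.mp hμ],
      ← Finset.sum_coe_sort S]
    simp [e, eval_monomial, Finsupp.prod]
  have := Fintype.ofFinite V
  calc V.ncard = Module.finrank K (V → K) := by
        rw [Module.finrank_fintype_fun_eq_card, ← Nat.card_eq_fintype_card, Nat.card_coe_set_eq]
    _ = Module.finrank K (Submodule.span K (Set.range e)) := by rw [hspan, finrank_top]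
    _ ≤ Fintype.card S := finrank_range_le_card e
    _ = (m.footprint J).ncard := by rw [Fintype.card_coe, Set.ncard_eq_toFinset_card _ hfin]

end MonomialOrder

def IsWeightedDegLex (ord : MonomialOrder (Fin 2)) (wX wY : ℕ) : Prop :=
  ∀ u v : Fin 2 →₀ ℕ, ord.toSyn u < ord.toSyn v ↔
    (u 0 * wX + u 1 * wY < v 0 * wX + v 1 * wY ∨
      (u 0 * wX + u 1 * wY = v 0 * wX + v 1 * wY ∧
        (u 0 < v 0 ∨ (u 0 = v 0 ∧ u 1 < v 1))))

theorem IsWeightedDegLex.degree_X_pow_add_C_mul_X_pow_add {K : Type*} [CommSemiring K]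
    [Nontrivial K] {ord : MonomialOrder (Fin 2)} {wX wY a b : ℕ}
    (hord : IsWeightedDegLex ord wX wY) (ha : 0 < a) (hw : a * wX = b * wY) (α : K)
    {R : MvPolynomial (Fin 2) K} (hR : ∀ μ ∈ R.support, μ 0 * wX + μ 1 * wY < a * wX) :
    ord.degree (X 0 ^ a + C α * X 1 ^ b + R) = Finsupp.single 0 a := by
  classical
  rw [add_assoc]
  refine ord.degree_X_pow_add_of_lt ha.ne' fun μ hμ => ?_
  rcases Finset.mem_union.mp (support_add hμ) with h | h
  · rw [C_mul_X_pow_eq_monomial] at h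
    rw [Finset.mem_singleton.mp (support_monomial_subset h)]
    exact (hord _ _).mpr (Or.inr ⟨by simp [hw], Or.inl (by simpa using ha)⟩)
  · exact (hord _ _).mpr (Or.inl (by simpa using hR μ h))

def box (a q : ℕ) : Set (Fin 2 →₀ ℕ) := {μ | μ 0 < a ∧ μ 1 < q}

theorem box_eq_preimage (a q : ℕ) :
    box a q = (Finsupp.equivFunOnFinite.trans (piFinTwoEquiv fun _ => ℕ)) ⁻¹'
      (Set.Iio a ×ˢ Set.Iio q) := by
  ext μ; simp [box]

theorem ncard_box (a q : ℕ) : (box a q).ncard = a * q := by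
  rw [box_eq_preimage, Set.ncard_preimage_of_injective_subset_range (Equiv.injective _)
    (by rw [Equiv.range_eq_univ]; exact Set.subset_univ _), Set.ncard_prod,
    Set.ncard_Iio_nat, Set.ncard_Iio_nat]

theorem finite_box (a q : ℕ) : (box a q).Finite := by
  rw [box_eq_preimage]
  exact ((Set.finite_Iio a).prod (Set.finite_Iio q)).preimage (Equiv.injective _).injOn

theorem footprint_subset_box {K : Type*} [CommSemiring K] [NoZeroDivisors K] [Nontrivial K]
    {m : MonomialOrder (Fin 2)} {J : Ideal (MvPolynomial (Fin 2) K)}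
    {f g : MvPolynomial (Fin 2) K} (hf : f ∈ J) (hg : g ∈ J) {a q : ℕ}
    (hfa : m.degree f = Finsupp.single 0 a) (hgq : m.degree g = Finsupp.single 1 q)
    (ha : a ≠ 0) (hq : q ≠ 0) : m.footprint J ⊆ box a q := fun μ hμ =>
  ⟨lt_of_not_ge fun h => MonomialOrder.notMem_footprint_of_degree_le hf
      (m.ne_zero_of_degree_ne_zero (by simpa [hfa])) (by simpa [hfa]) hμ,
    lt_of_not_ge fun h => MonomialOrder.notMem_footprint_of_degree_le hg
      (m.ne_zero_of_degree_ne_zero (by simpa [hgq])) (by simpa [hgq]) hμ⟩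

theorem stmt_10_general (q a b : ℕ) (F : Type*) [Field F] [Fintype F]
    (hcard : Fintype.card F = q) (ha : 0 < a)
    (wX wY : ℕ) (hwX : wX = b / Nat.gcd a b) (hwY : wY = a / Nat.gcd a b)
    (α : F)
    (R : MvPolynomial (Fin 2) F)
    (hR : ∀ μ ∈ R.support, μ 0 * wX + μ 1 * wY < a * wX)
    (Fpoly : MvPolynomial (Fin 2) F)
    (hFpoly : Fpoly = X 0 ^ a + C α * X 1 ^ b + R)
    (ord : MonomialOrder (Fin 2))
    -- `ord` is the weighted degree lexicographic ordering (ties broken by lex with Y ≺ X)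
    (hord : ∀ u v : Fin 2 →₀ ℕ, ord.toSyn u < ord.toSyn v ↔
      (u 0 * wX + u 1 * wY < v 0 * wX + v 1 * wY ∨
        (u 0 * wX + u 1 * wY = v 0 * wX + v 1 * wY ∧
          (u 0 < v 0 ∨ (u 0 = v 0 ∧ u 1 < v 1)))))
    (J : Ideal (MvPolynomial (Fin 2) F))
    (hJ : J = Ideal.span {Fpoly, X 0 ^ q - X 0, X 1 ^ q - X 1})
    (hzeros : Set.ncard {P : Fin 2 → F | eval P Fpoly = 0} = a * q) :
    (Fpoly ∈ J ∧ (X 1 ^ q - X 1 : MvPolynomial (Fin 2) F) ∈ J) ∧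
    (∀ f ∈ J, f ≠ 0 →
      lmDeg ord Fpoly ≤ lmDeg ord f ∨
      lmDeg ord (X 1 ^ q - X 1 : MvPolynomial (Fin 2) F) ≤ lmDeg ord f) ∧
    {μ : Fin 2 →₀ ℕ | ∀ f ∈ J, f ≠ 0 → lmDeg ord f ≠ μ} =
      {μ : Fin 2 →₀ ℕ | μ 0 < a ∧ μ 1 < q} := by
  have hw : a * wX = b * wY := by
    rw [hwX, hwY, ← Nat.mul_div_assoc _ (Nat.gcd_dvd_right a b),
      ← Nat.mul_div_assoc _ (Nat.gcd_dvd_left a b), mul_comm]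
  have hq : 2 ≤ q := hcard ▸ Fintype.one_lt_card
  have hFJ : Fpoly ∈ J := hJ ▸ Ideal.subset_span (by simp)
  have hYJ : (X 1 ^ q - X 1 : MvPolynomial (Fin 2) F) ∈ J := hJ ▸ Ideal.subset_span (by simp)
  have hdegF : ord.degree Fpoly = Finsupp.single 0 a :=
    hFpoly ▸ IsWeightedDegLex.degree_X_pow_add_C_mul_X_pow_add hord ha hw α hR
  have hdegY : ord.degree (X 1 ^ q - X 1 : MvPolynomial (Fin 2) F) = Finsupp.single 1 q :=
    ord.degree_X_pow_sub_X hq 1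
  have hsub : ord.footprint J ⊆ box a q :=
    footprint_subset_box hFJ hYJ hdegF hdegY ha.ne' (by omega)
  have hvan : ∀ g ∈ J, ∀ P ∈ {P : Fin 2 → F | eval P Fpoly = 0}, eval P g = 0 := by
    intro g hg P hP
    refine (Ideal.span_le (I := RingHom.ker (eval P))).mpr ?_ (hJ ▸ hg)
    rintro _ (rfl | rfl | rfl)
    · exact hP
    all_goals simp [← hcard, FiniteField.pow_card]
  have hcount : (box a q).ncard ≤ (ord.footprint J).ncard := by
    rw [ncard_box, ← hzeros]
    exact ord.ncard_le_ncard_footprint hvan ((finite_box a q).subset hsub)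
  have hfoot : ord.footprint J = box a q :=
    Set.eq_of_subset_of_ncard_le hsub hcount (finite_box a q)
  refine ⟨⟨hFJ, hYJ⟩, fun f hf hf0 => ?_, hfoot⟩
  have hdeg : ord.degree f ∉ box a q := hfoot ▸ fun h => h f hf hf0 rfl
  change ¬(_ ∧ _) at hdeg
  simp only [MonomialOrder.lmDeg_eq_degree, hdegF, hdegY, Finsupp.single_le_iff]
  omega

/-- For an optimal generalised `C_ab` polynomial `F = X^a + αY^b + R` (having exactly `aq`
zeros in `F_q²`), the set `{F, Y^q - Y}` is a Gröbner basis of `⟨F, X^q - X, Y^q - Y⟩` with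
respect to the weighted degree lexicographic order, and the footprint is the box
`{X^i Y^j : i < a, j < q}`. -/
theorem stmt_10 (q a b : ℕ) (hq : IsPrimePow q) (F : Type*) [Field F] [Fintype F]
    (hcard : Fintype.card F = q) (ha : 0 < a) (hab : a < b) (haq : a ≤ q)
    (wX wY : ℕ) (hwX : wX = b / Nat.gcd a b) (hwY : wY = a / Nat.gcd a b)
    (α : F) (hα : α ≠ 0)
    (R : MvPolynomial (Fin 2) F)
    (hR : ∀ μ ∈ R.support, μ 0 * wX + μ 1 * wY < a * wX)
    (Fpoly : MvPolynomial (Fin 2) F)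
    (hFpoly : Fpoly = X 0 ^ a + C α * X 1 ^ b + R)
    (ord : MonomialOrder (Fin 2))
    -- `ord` is the weighted degree lexicographic ordering (ties broken by lex with Y ≺ X)
    (hord : ∀ u v : Fin 2 →₀ ℕ, ord.toSyn u < ord.toSyn v ↔
      (u 0 * wX + u 1 * wY < v 0 * wX + v 1 * wY ∨
        (u 0 * wX + u 1 * wY = v 0 * wX + v 1 * wY ∧
          (u 0 < v 0 ∨ (u 0 = v 0 ∧ u 1 < v 1)))))
    (J : Ideal (MvPolynomial (Fin 2) F))
    (hJ : J = Ideal.span {Fpoly, X 0 ^ q - X 0, X 1 ^ q - X 1})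
    (hzeros : Set.ncard {P : Fin 2 → F | eval P Fpoly = 0} = a * q) :
    (Fpoly ∈ J ∧ (X 1 ^ q - X 1 : MvPolynomial (Fin 2) F) ∈ J) ∧
    (∀ f ∈ J, f ≠ 0 →
      lmDeg ord Fpoly ≤ lmDeg ord f ∨
      lmDeg ord (X 1 ^ q - X 1 : MvPolynomial (Fin 2) F) ≤ lmDeg ord f) ∧
    {μ : Fin 2 →₀ ℕ | ∀ f ∈ J, f ≠ 0 → lmDeg ord f ≠ μ} =
      {μ : Fin 2 →₀ ℕ | μ 0 < a ∧ μ 1 < q} :=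
  stmt_10_general q a b F hcard ha wX wY hwX hwY α R hR Fpoly hFpoly ord hord J hJ hzeros
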